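/- arXiv:2205.14805 — 10 statements merged into one kernel-verified Lean document; each statement's English description precedes it below -/
import Mathlib

section
/- For nonnegative integers n, k, r with n ≥ k, the λ-analogue of the r-Stirling number of the second kind satisfies S₂_λ^{(r)}(n,k) = λ^{n-k} (1/k!) Σ_{l=0}^{k} C(k,l) (-1)^{k-l} (l + r/λ)^n. In particular this expression vanishes when 0 ≤ n < k. -/
open Finset PowerSeries

/-- Generalized falling factorial `(x)_{n,λ}`. -/
def ffact (l x : ℝ) : ℕ → ℝ
  | 0 => 1
  | n + 1 => ffact l x n * (x - n * l)

/-!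
Substituting `x = m λ` with `m ∈ ℕ` turns the defining identity into the Newton expansion
`(m λ + r)^n = ∑ₖ (m choose k) · S₂_λ^{(r)}(n,k) λ^k k!`, because `(m λ)_{k,λ} = λ^k m (m-1) ⋯ (m-k+1)`.
The coefficients of a Newton expansion are the iterated forward differences at `0`, and the
`k`-th forward difference of `m ↦ (m λ + r)^n = λ^n (m + r/λ)^n` at `0` is `λ^n` times the
alternating sum of the statement. That sum is also the `k`-th forward difference of a polynomial of
degree `n`, hence vanishes when `n < k`.
-/

open fwdDiff

section FwdDiff

variable {M R : Type*} [AddCommMonoid M] [CommRing R]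

theorem fwdDiff_iter_eq_sum_choose_mul (h : M) (f : M → R) (k : ℕ) (y : M) :
    Δ_[h] ^[k] f y = ∑ j ∈ range (k + 1), (k.choose j : R) * (-1) ^ (k - j) * f (y + j • h) := by
  rw [fwdDiff_iter_eq_sum_shift]
  refine sum_congr rfl fun j _ ↦ ?_
  rw [zsmul_eq_mul]
  push_cast
  ring

theorem sum_choose_mul_neg_one_pow_mul_add_pow_eq_zero (c : R) {n k : ℕ} (h : n < k) :
    ∑ j ∈ range (k + 1), (k.choose j : R) * (-1) ^ (k - j) * ((j : R) + c) ^ n = 0 := by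
  have := fwdDiff_iter_comp_add (1 : R) (fun x ↦ x ^ n) c k 0
  rw [fwdDiff_iter_pow_eq_zero_of_lt h, fwdDiff_iter_eq_sum_choose_mul] at this
  simpa only [zero_add, nsmul_one, Pi.zero_apply] using this

theorem fwdDiff_iter_sum_choose_smul_zero {G : Type*} [AddCommGroup G] (a : ℕ → G) {N k : ℕ}
    (hk : k < N) : Δ_[1] ^[k] (fun m : ℕ ↦ ∑ i ∈ range N, m.choose i • a i) 0 = a k := by
  calc Δ_[1] ^[k] (fun m : ℕ ↦ ∑ i ∈ range N, m.choose i • a i) 0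
    _ = ∑ i ∈ range N, Δ_[1] ^[k] (fun m : ℕ ↦ m.choose i • a i) 0 := by
      simp only [fwdDiff_iter_eq_sum_shift, smul_sum]
      rw [sum_comm]
    _ = ∑ i ∈ range N, (Δ_[1] ^[k] (fun m ↦ m.choose i : ℕ → ℤ) 0) • a i := by
      simp only [fwdDiff_iter_eq_sum_shift, sum_smul, smul_assoc, natCast_zsmul]
    _ = a k := by
      simp [fwdDiff_iter_choose_zero, hk]

end FwdDiff

theorem ffact_mul_eq_pow_mul_descPochhammer_eval (l x : ℝ) (j : ℕ) :
    ffact l (x * l) j = l ^ j * (descPochhammer ℝ j).eval x := by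
  induction j with
  | zero => simp [ffact]
  | succ j ih =>
    rw [ffact, ih, descPochhammer_succ_eval]
    ring

section StirlingLambda

variable {l : ℝ} {r : ℕ} {S : ℕ → ℕ → ℝ}
  (hS : ∀ (n : ℕ) (x : ℝ), (x + r) ^ n = ∑ k ∈ range (n + 1), S n k * ffact l x k)
include hS

theorem natCast_mul_add_pow_eq_sum_choose_smul (n m : ℕ) :
    ((m : ℝ) * l + r) ^ n = ∑ i ∈ range (n + 1), m.choose i • (S n i * l ^ i * i.factorial) := by
  rw [hS]
  refine sum_congr rfl fun i _ ↦ ?_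
  rw [ffact_mul_eq_pow_mul_descPochhammer_eval, descPochhammer_eval_eq_descFactorial,
    Nat.descFactorial_eq_factorial_mul_choose, nsmul_eq_mul]
  push_cast
  ring

theorem stirling_mul_pow_mul_factorial_eq_sum {n k : ℕ} (hk : k ≤ n) :
    S n k * l ^ k * k.factorial =
      ∑ j ∈ range (k + 1), (k.choose j : ℝ) * (-1) ^ (k - j) * ((j : ℝ) * l + r) ^ n := by
  rw [← fwdDiff_iter_sum_choose_smul_zero (fun i ↦ S n i * l ^ i * i.factorial)
    (Nat.lt_succ_of_le hk), fwdDiff_iter_eq_sum_choose_mul]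
  simp only [← natCast_mul_add_pow_eq_sum_choose_smul hS, zero_add, smul_eq_mul, mul_one]

end StirlingLambda

/-- Theorem 2: expression of λ-analogues of r-Stirling numbers of the second kind via the
finite difference sum, together with its vanishing for n < k. -/
theorem stmt1 (l : ℝ) (hl : l ≠ 0) (r : ℕ) (S : ℕ → ℕ → ℝ)
    (hS : ∀ (n : ℕ) (x : ℝ), (x + r) ^ n = ∑ k ∈ range (n + 1), S n k * ffact l x k)
    (n k : ℕ) :
    (k ≤ n →
      S n k = l ^ (n - k) * (1 / k.factorial) *
        ∑ j ∈ range (k + 1), (k.choose j : ℝ) * (-1 : ℝ) ^ (k - j) * ((j : ℝ) + r / l) ^ n) ∧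
    (n < k →
      l ^ (n - k) * (1 / k.factorial) *
        ∑ j ∈ range (k + 1), (k.choose j : ℝ) * (-1 : ℝ) ^ (k - j) * ((j : ℝ) + r / l) ^ n
        = 0) := by
  refine ⟨fun hk ↦ ?_, fun hk ↦ ?_⟩
  · have key := stirling_mul_pow_mul_factorial_eq_sum hS hk
    have hscale : ∀ j : ℕ, ((j : ℝ) * l + r) ^ n = l ^ n * ((j : ℝ) + r / l) ^ n := fun j ↦ by
      rw [← mul_pow]
      field_simp
    simp only [hscale, mul_left_comm _ (l ^ n), ← mul_sum] at key
    set T := ∑ j ∈ range (k + 1), (k.choose j : ℝ) * (-1) ^ (k - j) * ((j : ℝ) + r / l) ^ n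
    rw [← pow_sub_mul_pow l hk] at key
    field_simp
    apply mul_left_cancel₀ (pow_ne_zero k hl)
    linear_combination key
  · rw [sum_choose_mul_neg_one_pow_mul_add_pow_eq_zero _ hk, mul_zero]
end

section
/- For nonnegative integers n, k, r with n ≥ k, S₂_λ^{(r)}(n,k) = Σ_{l=k}^{n} C(n,l) S₂_λ(l,k) r^{n-l}, where S₂_λ(l,k) are the λ-analogues of Stirling numbers of the second kind. -/
open Finset PowerSeries

lemma ffact_eq_prod (l x : ℝ) (n : ℕ) : ffact l x n = ∏ i ∈ range n, (x - i * l) := by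
  induction n with
  | zero => rfl
  | succ n ih => rw [ffact, ih, prod_range_succ]

lemma ffact_natCast_mul_eq_zero (l : ℝ) {m k : ℕ} (h : m < k) : ffact l (m * l) k = 0 := by
  rw [ffact_eq_prod]
  exact prod_eq_zero (mem_range.2 h) (sub_self _)

lemma ffact_natCast_mul_self_ne_zero {l : ℝ} (hl : l ≠ 0) (m : ℕ) : ffact l (m * l) m ≠ 0 := by
  rw [ffact_eq_prod, prod_ne_zero_iff]
  intro i hi
  rw [← sub_mul]
  exact mul_ne_zero (sub_ne_zero.2 (by exact_mod_cast (mem_range.1 hi).ne')) hl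

lemma eq_zero_of_forall_sum_mul_ffact_eq_zero {l : ℝ} (hl : l ≠ 0) {N : ℕ} {d : ℕ → ℝ}
    (h : ∀ x, ∑ i ∈ range N, d i * ffact l x i = 0) {m : ℕ} (hm : m < N) : d m = 0 := by
  induction m using Nat.strong_induction_on with
  | _ m ih =>
    have hsum := h (m * l)
    rw [sum_eq_single_of_mem m (mem_range.2 hm)] at hsum
    · exact (mul_eq_zero.1 hsum).resolve_right (ffact_natCast_mul_self_ne_zero hl m)
    · intro i hi him
      rcases lt_or_gt_of_ne him with hlt | hgt
      · rw [ih i hlt (hlt.trans hm), zero_mul]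
      · rw [ffact_natCast_mul_eq_zero l hgt, mul_zero]

lemma coeff_eq_of_forall_sum_mul_ffact_eq {l : ℝ} (hl : l ≠ 0) {N : ℕ} {a b : ℕ → ℝ}
    (h : ∀ x, ∑ i ∈ range N, a i * ffact l x i = ∑ i ∈ range N, b i * ffact l x i)
    {m : ℕ} (hm : m < N) : a m = b m :=
  sub_eq_zero.1 <| eq_zero_of_forall_sum_mul_ffact_eq_zero hl (d := a - b)
    (fun x => by simp only [Pi.sub_apply, sub_mul, sum_sub_distrib, h x, sub_self]) hm

lemma add_pow_eq_sum_ffact (l : ℝ) (S : ℕ → ℕ → ℝ)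
    (hS : ∀ (n : ℕ) (x : ℝ), x ^ n = ∑ k ∈ range (n + 1), S n k * ffact l x k)
    (x r : ℝ) (n : ℕ) :
    (x + r) ^ n = ∑ m ∈ range (n + 1),
      (∑ j ∈ Icc m n, (n.choose j : ℝ) * S j m * r ^ (n - j)) * ffact l x m := by
  have hterm : ∀ j, x ^ j * r ^ (n - j) * (n.choose j : ℝ) =
      ∑ m ∈ range (j + 1), (n.choose j : ℝ) * S j m * r ^ (n - j) * ffact l x m := by
    intro j
    rw [hS j x, sum_mul, sum_mul]
    exact sum_congr rfl fun m _ => by ring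
  rw [add_pow]
  simp_rw [hterm, sum_mul]
  refine sum_comm' fun j m => ?_
  simp only [mem_range, mem_Icc]
  omega

/-- Theorem 3: `S₂_λ^{(r)}(n,k) = ∑_{l=k}^n C(n,l) S₂_λ(l,k) r^{n-l}`. -/
theorem stmt2 (l : ℝ) (hl : l ≠ 0) (r : ℕ) (S Sr : ℕ → ℕ → ℝ)
    (hS : ∀ (n : ℕ) (x : ℝ), x ^ n = ∑ k ∈ range (n + 1), S n k * ffact l x k)
    (hSr : ∀ (n : ℕ) (x : ℝ), (x + r) ^ n = ∑ k ∈ range (n + 1), Sr n k * ffact l x k)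
    (n k : ℕ) (hkn : k ≤ n) :
    Sr n k = ∑ j ∈ Icc k n, (n.choose j : ℝ) * S j k * (r : ℝ) ^ (n - j) :=
  coeff_eq_of_forall_sum_mul_ffact_eq hl
    (fun x => (hSr n x).symm.trans (add_pow_eq_sum_ffact l S hS x r n)) (Nat.lt_succ_of_le hkn)
end

section
/- For integers n ≥ k ≥ 1, the λ-analogues of r-Stirling numbers of the second kind satisfy the recurrence S₂_λ^{(r)}(n+1,k) = S₂_λ^{(r)}(n,k-1) + (λk + r) S₂_λ^{(r)}(n,k). -/
/-
The polynomials `(X)_{k,λ}` are monic of degree `k`, so they form a basis of `R[X]` and the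
`S₂_λ^{(r)}(n,k)` are the coordinates of `(X + r)^n` in it. Multiplication by `X + a` acts on this
basis by `(X + a)(X)_{k,λ} = (X)_{k+1,λ} + (kλ + a)(X)_{k,λ}`, which is the recurrence.
-/

open Finset PowerSeries

open Polynomial

section FfactPoly

variable {R : Type*} [CommRing R]

noncomputable def ffactPoly (l : R) (k : ℕ) : R[X] :=
  ∏ i ∈ range k, (Polynomial.X - Polynomial.C (i * l))

lemma ffactPoly_succ (l : R) (k : ℕ) :
    ffactPoly l (k + 1) = ffactPoly l k * (Polynomial.X - Polynomial.C (k * l)) :=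
  prod_range_succ _ _

lemma monic_ffactPoly (l : R) (k : ℕ) : (ffactPoly l k).Monic :=
  monic_prod_of_monic _ _ fun _ _ => monic_X_sub_C _

lemma natDegree_ffactPoly [Nontrivial R] (l : R) (k : ℕ) : (ffactPoly l k).natDegree = k := by
  rw [ffactPoly, natDegree_prod_of_monic _ _ fun _ _ => monic_X_sub_C _]
  simp only [natDegree_X_sub_C, sum_const, card_range, smul_eq_mul, mul_one]

lemma X_add_C_mul_ffactPoly (a l : R) (k : ℕ) :
    (Polynomial.X + Polynomial.C a) * ffactPoly l k
      = ffactPoly l (k + 1) + (k * l + a) • ffactPoly l k := by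
  rw [ffactPoly_succ, Polynomial.smul_eq_C_mul, map_add, map_mul, map_natCast]
  ring

noncomputable def ffactSeq [Nontrivial R] (l : R) : Sequence R where
  elems' := ffactPoly l
  degree_eq' k := by
    rw [degree_eq_natDegree (monic_ffactPoly l k).ne_zero, natDegree_ffactPoly]

noncomputable def ffactBasis [IsDomain R] (l : R) : Module.Basis ℕ R R[X] :=
  (ffactSeq l).basis fun k => by simp [ffactSeq, (monic_ffactPoly l k).leadingCoeff]

lemma ffactBasis_apply [IsDomain R] (l : R) (k : ℕ) : ffactBasis l k = ffactPoly l k :=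
  Sequence.basis_eq_self _ _ _

lemma ffactBasis_repr_X_add_C_mul_self [IsDomain R] (a l : R) (i : ℕ) :
    (ffactBasis l).repr ((Polynomial.X + Polynomial.C a) * ffactBasis l i)
      = Finsupp.single (i + 1) 1 + (i * l + a) • Finsupp.single i 1 := by
  rw [ffactBasis_apply, X_add_C_mul_ffactPoly, ← ffactBasis_apply, ← ffactBasis_apply, map_add,
    map_smul, Module.Basis.repr_self, Module.Basis.repr_self]

theorem ffactBasis_repr_X_add_C_mul [IsDomain R] (a l : R) (p : R[X]) (k : ℕ) :
    (ffactBasis l).repr ((Polynomial.X + Polynomial.C a) * p) (k + 1)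
      = (ffactBasis l).repr p k + ((k + 1) * l + a) * (ffactBasis l).repr p (k + 1) := by
  let b := ffactBasis l
  suffices b.coord (k + 1) ∘ₗ LinearMap.mulLeft R (Polynomial.X + Polynomial.C a)
      = b.coord k + ((k + 1) * l + a) • b.coord (k + 1) from LinearMap.congr_fun this p
  refine b.ext fun i => ?_
  simp only [LinearMap.comp_apply, LinearMap.mulLeft_apply, LinearMap.add_apply,
    LinearMap.smul_apply, b.coord_apply, b.repr_self, smul_eq_mul, b,
    ffactBasis_repr_X_add_C_mul_self, Finsupp.add_apply, Finsupp.smul_apply, Finsupp.single_apply]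
  rcases eq_or_ne i k with rfl | hik
  · simp
  rcases eq_or_ne i (k + 1) with rfl | hik'
  · simp
  simp [hik, hik']

end FfactPoly

lemma eval_ffactPoly (l x : ℝ) (k : ℕ) : (ffactPoly l k).eval x = ffact l x k := by
  induction k with
  | zero => simp [ffactPoly, ffact]
  | succ k ih => simp [ffactPoly_succ, ffact, ih]

lemma ffactBasis_repr_eq_of_eval_eq_sum {l : ℝ} {p : ℝ[X]} {N : ℕ} {c : ℕ → ℝ}
    (hp : ∀ x, p.eval x = ∑ k ∈ range (N + 1), c k * ffact l x k) {m : ℕ} (hm : m ≤ N) :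
    (ffactBasis l).repr p m = c m := by
  have hsum : p = ∑ k ∈ range (N + 1), c k • ffactBasis l k :=
    Polynomial.funext fun x => by simp [hp, eval_finsetSum, ffactBasis_apply, eval_ffactPoly]
  rw [hsum, map_sum, Finsupp.finsetSum_apply]
  simp [Finsupp.single_apply, Nat.lt_succ_iff.mpr hm]

theorem stmt3_general (l : ℝ) (r : ℕ) (Sr : ℕ → ℕ → ℝ)
    (hSr : ∀ (n : ℕ) (x : ℝ), (x + r) ^ n = ∑ k ∈ range (n + 1), Sr n k * ffact l x k)
    (n k : ℕ) (hk : 1 ≤ k) (hkn : k ≤ n) :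
    Sr (n + 1) k = Sr n (k - 1) + (l * k + r) * Sr n k := by
  have hcoord : ∀ m i, i ≤ m →
      Sr m i = (ffactBasis l).repr ((Polynomial.X + Polynomial.C (r : ℝ)) ^ m) i :=
    fun m i hi => (ffactBasis_repr_eq_of_eval_eq_sum (fun x => by simpa using hSr m x) hi).symm
  obtain ⟨j, rfl⟩ : ∃ j, k = j + 1 := ⟨k - 1, by omega⟩
  rw [Nat.add_sub_cancel, hcoord (n + 1) (j + 1) (by omega), hcoord n j (by omega),
    hcoord n (j + 1) hkn, pow_succ', ffactBasis_repr_X_add_C_mul]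
  push_cast
  ring

/-- Theorem 4: recurrence
`S₂_λ^{(r)}(n+1,k) = S₂_λ^{(r)}(n,k-1) + (λk + r) S₂_λ^{(r)}(n,k)` for n ≥ k ≥ 1. -/
theorem stmt3 (l : ℝ) (hl : l ≠ 0) (r : ℕ) (Sr : ℕ → ℕ → ℝ)
    (hSr : ∀ (n : ℕ) (x : ℝ), (x + r) ^ n = ∑ k ∈ range (n + 1), Sr n k * ffact l x k)
    (n k : ℕ) (hk : 1 ≤ k) (hkn : k ≤ n) :
    Sr (n + 1) k = Sr n (k - 1) + (l * k + r) * Sr n k :=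
  stmt3_general l r Sr hSr n k hk hkn
end

section
/- For nonnegative integers m, n, k with n ≥ m + k, we have C(m+k, k) · S₂_λ^{(r)}(n, k+m) = Σ_{l=k}^{n-m} C(n,l) S₂_λ(l,k) S₂_λ^{(r)}(n-l, m). -/
open Finset PowerSeries

/-!
Write `Δ` for the forward difference with step `λ`. It lowers generalized falling factorials,
`Δ (x)_{a+1,λ} = (a+1) λ (x)_{a,λ}`, so `Δᵏ (x)_{a,λ}` at `0` is `λᵏ k!` if `a = k` and `0`
otherwise. Hence `Δᵏ xⁿ (0) = λᵏ k! S₂_λ(n,k)` and `Δᵏ (x+r)ⁿ (0) = λᵏ k! S₂_λ^{(r)}(n,k)`.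
Since `Δ` commutes with translations, `Δᵏ` in `x` and `Δᵐ` in `y` of `(x+y+r)ⁿ` at `(0,0)` give
`Δᵏ⁺ᵐ (x+r)ⁿ (0)`; expanding `(x+(y+r))ⁿ` binomially gives instead the right-hand side, scaled by
`λᵏ⁺ᵐ k! m!`.
-/

open fwdDiff

section fwdDiff

variable {M R : Type*} [AddCommMonoid M] [CommRing R]

theorem fwdDiff_iter_sum_mul_apply (h : M) {ι : Type*} (s : Finset ι) (c : ι → R) (u : ι → M → R)
    (n : ℕ) (x : M) :
    Δ_[h] ^[n] (fun x ↦ ∑ i ∈ s, c i * u i x) x = ∑ i ∈ s, c i * Δ_[h] ^[n] (u i) x := by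
  have hfun : (fun x ↦ ∑ i ∈ s, c i * u i x) = ∑ i ∈ s, c i • u i := by
    ext; simp [Finset.sum_apply]
  simp [hfun, fwdDiff_iter_finsetSum, Finset.sum_apply, fwdDiff_iter_const_smul]

theorem fwdDiff_iter_fwdDiff_iter_comp_add {G : Type*} [AddCommGroup G] (h : M) (g : M → G)
    (k m : ℕ) (x y : M) :
    Δ_[h] ^[k] (fun x ↦ Δ_[h] ^[m] (fun y ↦ g (x + y)) y) x = Δ_[h] ^[k + m] g (x + y) := by
  have inner : ∀ x, Δ_[h] ^[m] (fun y ↦ g (x + y)) y = Δ_[h] ^[m] g (x + y) := fun x ↦ by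
    simpa only [add_comm] using fwdDiff_iter_comp_add h g x m y
  simp only [inner, fwdDiff_iter_comp_add, Function.iterate_add_apply]

theorem fwdDiff_iter_add_pow_apply_add (h a : R) (k m n : ℕ) (x y : R) :
    Δ_[h] ^[k + m] (fun z ↦ (z + a) ^ n) (x + y) =
      ∑ j ∈ range (n + 1), (n.choose j : R) *
        Δ_[h] ^[k] (fun x ↦ x ^ j) x * Δ_[h] ^[m] (fun y ↦ (y + a) ^ (n - j)) y := by
  rw [← fwdDiff_iter_fwdDiff_iter_comp_add h (fun z ↦ (z + a) ^ n)]
  have binomial : ∀ x, Δ_[h] ^[m] (fun y ↦ (x + y + a) ^ n) y =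
      ∑ j ∈ range (n + 1), (n.choose j * Δ_[h] ^[m] (fun y ↦ (y + a) ^ (n - j)) y) * x ^ j :=
    fun x ↦ calc
      _ = ∑ j ∈ range (n + 1), (n.choose j * x ^ j) * Δ_[h] ^[m] (fun y ↦ (y + a) ^ (n - j)) y := by
        rw [← fwdDiff_iter_sum_mul_apply]
        refine congrArg (fun f ↦ Δ_[h] ^[m] f y) (funext fun y ↦ ?_)
        rw [add_assoc, add_pow]
        exact Finset.sum_congr rfl fun j _ ↦ by ring
      _ = _ := Finset.sum_congr rfl fun j _ ↦ by ring
  simp only [binomial, fwdDiff_iter_sum_mul_apply]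
  exact Finset.sum_congr rfl fun j _ ↦ by ring

end fwdDiff

theorem sum_range_mul_ite_mul_ite {R : Type*} [NonUnitalNonAssocSemiring R] (c a b : ℕ → R)
    {n k m : ℕ} (hmn : m ≤ n) :
    ∑ j ∈ range (n + 1), c j * (if k ≤ j then a j else 0) * (if m ≤ n - j then b j else 0) =
      ∑ j ∈ Icc k (n - m), c j * a j * b j := by
  refine (Finset.sum_subset (fun j hj ↦ ?_) fun j hjn hj ↦ ?_).symm.trans
    (Finset.sum_congr rfl fun j hj ↦ ?_)
  · simp only [mem_Icc, mem_range] at hj ⊢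
    omega
  · simp only [mem_Icc, mem_range, not_and_or, not_le] at hjn hj
    rcases hj with hj | hj
    · simp [hj]
    · simp [show ¬m ≤ n - j by omega]
  · simp only [mem_Icc] at hj
    rw [if_pos hj.1, if_pos (by omega)]

theorem ffact_add_self_succ (l x : ℝ) (a : ℕ) : ffact l (x + l) (a + 1) = (x + l) * ffact l x a := by
  induction a with
  | zero => simp [ffact]
  | succ a ih =>
    rw [ffact, ih, ffact]
    push_cast
    ring

theorem ffact_zero_succ (l : ℝ) (a : ℕ) : ffact l 0 (a + 1) = 0 := by
  induction a with
  | zero => simp [ffact]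
  | succ a ih => rw [ffact, ih, zero_mul]

theorem fwdDiff_ffact (l : ℝ) (a : ℕ) :
    Δ_[l] (fun x ↦ ffact l x a) = fun x ↦ a * l * ffact l x (a - 1) := by
  ext x
  cases a with
  | zero => simp [fwdDiff, ffact]
  | succ a =>
    simp only [fwdDiff, Nat.add_sub_cancel]
    rw [ffact_add_self_succ, ffact]
    push_cast
    ring

theorem fwdDiff_iter_ffact (l : ℝ) (a k : ℕ) :
    Δ_[l] ^[k] (fun x ↦ ffact l x a) = fun x ↦ l ^ k * a.descFactorial k * ffact l x (a - k) := by
  induction k with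
  | zero => simp
  | succ k ih =>
    have hfun : (fun x ↦ l ^ k * a.descFactorial k * ffact l x (a - k)) =
        (l ^ k * a.descFactorial k) • fun x ↦ ffact l x (a - k) := rfl
    rw [Function.iterate_succ_apply', ih, hfun, fwdDiff_const_smul, fwdDiff_ffact]
    ext x
    rw [Pi.smul_apply, smul_eq_mul, Nat.descFactorial_succ, Nat.sub_sub]
    rcases Nat.lt_or_ge a (k + 1) with hak | hak
    · simp [Nat.sub_eq_zero_of_le (Nat.le_of_lt_succ hak)]
    · push_cast [Nat.cast_sub (Nat.le_of_succ_le hak)]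
      ring

theorem fwdDiff_iter_ffact_apply_zero (l : ℝ) (a k : ℕ) :
    Δ_[l] ^[k] (fun x ↦ ffact l x a) 0 = if k = a then l ^ k * k.factorial else 0 := by
  rw [fwdDiff_iter_ffact]
  rcases lt_trichotomy a k with hak | rfl | hak
  · simp [Nat.descFactorial_eq_zero_iff_lt.2 hak, hak.ne']
  · simp [ffact, Nat.descFactorial_self]
  · obtain ⟨b, hb⟩ : ∃ b, a - k = b + 1 := ⟨a - k - 1, by omega⟩
    simp [hb, ffact_zero_succ, hak.ne]

theorem fwdDiff_iter_apply_zero_of_eq_sum_ffact (l : ℝ) {f : ℝ → ℝ} {c : ℕ → ℝ} {N : ℕ}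
    (hf : ∀ x, f x = ∑ a ∈ range (N + 1), c a * ffact l x a) (k : ℕ) :
    Δ_[l] ^[k] f 0 = if k ≤ N then c k * (l ^ k * k.factorial) else 0 := by
  rw [funext hf, fwdDiff_iter_sum_mul_apply]
  simp only [fwdDiff_iter_ffact_apply_zero, mul_ite, mul_zero, Finset.sum_ite_eq, mem_range,
    Nat.lt_succ_iff]

/-- Theorem 5: `C(m+k,k) S₂_λ^{(r)}(n,k+m) = ∑_{l=k}^{n-m} C(n,l) S₂_λ(l,k) S₂_λ^{(r)}(n-l,m)`. -/
theorem stmt4 (l : ℝ) (hl : l ≠ 0) (r : ℕ) (S Sr : ℕ → ℕ → ℝ)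
    (hS : ∀ (n : ℕ) (x : ℝ), x ^ n = ∑ k ∈ range (n + 1), S n k * ffact l x k)
    (hSr : ∀ (n : ℕ) (x : ℝ), (x + r) ^ n = ∑ k ∈ range (n + 1), Sr n k * ffact l x k)
    (m n k : ℕ) (h : m + k ≤ n) :
    ((m + k).choose k : ℝ) * Sr n (k + m) =
      ∑ j ∈ Icc k (n - m), (n.choose j : ℝ) * S j k * Sr (n - j) m := by
  have hΔS (j i : ℕ) :
      Δ_[l] ^[i] (fun x ↦ x ^ j) 0 = if i ≤ j then S j i * (l ^ i * i.factorial) else 0 :=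
    fwdDiff_iter_apply_zero_of_eq_sum_ffact l (hS j) i
  have hΔSr (j i : ℕ) :
      Δ_[l] ^[i] (fun x ↦ (x + r) ^ j) 0 = if i ≤ j then Sr j i * (l ^ i * i.factorial) else 0 :=
    fwdDiff_iter_apply_zero_of_eq_sum_ffact l (hSr j) i
  have hscale : l ^ k * k.factorial * (l ^ m * m.factorial) ≠ 0 := by positivity
  refine mul_right_cancel₀ hscale ?_
  calc ((m + k).choose k : ℝ) * Sr n (k + m) * (l ^ k * k.factorial * (l ^ m * m.factorial))
      = Sr n (k + m) * (l ^ (k + m) * (k + m).factorial) := by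
        rw [add_comm k m, ← Nat.add_choose_mul_factorial_mul_factorial]
        push_cast
        ring
    _ = Δ_[l] ^[k + m] (fun z ↦ (z + r) ^ n) (0 + 0) := by rw [add_zero, hΔSr, if_pos (by omega)]
    _ = ∑ j ∈ range (n + 1), (n.choose j : ℝ) *
          Δ_[l] ^[k] (fun x ↦ x ^ j) 0 * Δ_[l] ^[m] (fun y ↦ (y + r) ^ (n - j)) 0 :=
        fwdDiff_iter_add_pow_apply_add l _ k m n 0 0
    _ = _ := by
        rw [Finset.sum_mul]
        simp only [hΔS, hΔSr, sum_range_mul_ite_mul_ite _ _ _ (by omega : m ≤ n)]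
        exact Finset.sum_congr rfl fun j _ ↦ by ring
end

section
/- For nonnegative integers n, k, r with n ≥ k, S₂_λ(n,k) = Σ_{l=k}^{n} C(n,l) S₂_λ^{(r)}(l,k) (-1)^{n-l} r^{n-l}. -/
open Finset PowerSeries

lemma ffact_natCast_mul_eq_zero_of_lt (l : ℝ) {m k : ℕ} (hmk : m < k) :
    ffact l (m * l) k = 0 := by
  rw [ffact_eq_prod]
  exact prod_eq_zero (mem_range.mpr hmk) (sub_self _)

lemma eq_zero_of_sum_mul_ffact_eq_zero {l : ℝ} (hl : l ≠ 0) {N : ℕ} {c : ℕ → ℝ}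
    (h : ∀ x, ∑ k ∈ range N, c k * ffact l x k = 0) {m : ℕ} (hm : m < N) : c m = 0 := by
  induction m using Nat.strong_induction_on with
  | _ m ih =>
    have hx := h (m * l)
    rw [sum_eq_single m] at hx
    · exact (mul_eq_zero.mp hx).resolve_right (ffact_natCast_mul_self_ne_zero hl m)
    · intro k _ hkm
      rcases hkm.lt_or_gt with hlt | hgt
      · rw [ih k hlt (hlt.trans hm), zero_mul]
      · rw [ffact_natCast_mul_eq_zero_of_lt l hgt, mul_zero]
    · exact fun hm' => absurd (mem_range.mpr hm) hm'

lemma eq_of_sum_mul_ffact_eq {l : ℝ} (hl : l ≠ 0) {N : ℕ} {c d : ℕ → ℝ}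
    (h : ∀ x, ∑ k ∈ range N, c k * ffact l x k = ∑ k ∈ range N, d k * ffact l x k)
    {m : ℕ} (hm : m < N) : c m = d m := by
  refine sub_eq_zero.mp
    (eq_zero_of_sum_mul_ffact_eq_zero (c := fun k => c k - d k) hl (fun x => ?_) hm)
  simp only [sub_mul, sum_sub_distrib, h, sub_self]

lemma pow_eq_sum_choose_mul_neg_pow_mul_add_pow {R : Type*} [CommRing R] (x a : R) (n : ℕ) :
    x ^ n =
      ∑ j ∈ range (n + 1), (n.choose j : R) * (-1) ^ (n - j) * a ^ (n - j) * (x + a) ^ j := by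
  calc x ^ n = ((x + a) + -a) ^ n := by rw [add_neg_cancel_right]
    _ = _ := by
      rw [add_pow]
      refine sum_congr rfl fun j _ => ?_
      rw [neg_pow]
      ring

lemma pow_eq_sum_mul_ffact_of_shifted {l : ℝ} {r : ℕ} {Sr : ℕ → ℕ → ℝ}
    (hSr : ∀ (n : ℕ) (x : ℝ), (x + r) ^ n = ∑ k ∈ range (n + 1), Sr n k * ffact l x k)
    (n : ℕ) (x : ℝ) :
    x ^ n = ∑ k ∈ range (n + 1), (∑ j ∈ Icc k n,
      (n.choose j : ℝ) * Sr j k * (-1 : ℝ) ^ (n - j) * (r : ℝ) ^ (n - j)) * ffact l x k := by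
  set b : ℕ → ℝ := fun j => (n.choose j : ℝ) * (-1) ^ (n - j) * (r : ℝ) ^ (n - j)
  calc x ^ n = ∑ j ∈ range (n + 1), b j * (x + r) ^ j :=
        pow_eq_sum_choose_mul_neg_pow_mul_add_pow x (r : ℝ) n
    _ = ∑ j ∈ range (n + 1), ∑ k ∈ range (j + 1), b j * (Sr j k * ffact l x k) := by
        simp only [hSr, mul_sum]
    _ = ∑ k ∈ range (n + 1), ∑ j ∈ Icc k n, b j * (Sr j k * ffact l x k) :=
        sum_comm' fun j k => by simp only [mem_range, mem_Icc]; omega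
    _ = _ := by
        simp only [sum_mul]
        refine sum_congr rfl fun k _ => sum_congr rfl fun j _ => ?_
        ring

/-- Theorem 6: `S₂_λ(n,k) = ∑_{l=k}^n C(n,l) S₂_λ^{(r)}(l,k) (-1)^{n-l} r^{n-l}`. -/
theorem stmt5 (l : ℝ) (hl : l ≠ 0) (r : ℕ) (S Sr : ℕ → ℕ → ℝ)
    (hS : ∀ (n : ℕ) (x : ℝ), x ^ n = ∑ k ∈ range (n + 1), S n k * ffact l x k)
    (hSr : ∀ (n : ℕ) (x : ℝ), (x + r) ^ n = ∑ k ∈ range (n + 1), Sr n k * ffact l x k)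
    (n k : ℕ) (hkn : k ≤ n) :
    S n k = ∑ j ∈ Icc k n,
      (n.choose j : ℝ) * Sr j k * (-1 : ℝ) ^ (n - j) * (r : ℝ) ^ (n - j) :=
  eq_of_sum_mul_ffact_eq hl
    (fun x => (hS n x).symm.trans (pow_eq_sum_mul_ffact_of_shifted hSr n x))
    (Nat.lt_succ_of_le hkn)
end

section
/- For nonnegative integers n, k with n ≥ k, a positive integer m, and nonnegative integer r, S₂_λ^{(r)}(n,k) / C(k+m, k) = Σ_{l=k}^{n} [C(n,l) / C(l+m, l)] · S₂_λ(l+m, k+m) · B^{(m)}_{n-l}(r/λ) · λ^{n-l}, where B^{(m)}_j(x) are the Bernoulli polynomials of order m. -/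
/-!
Evaluating an expansion `(x + ρ)^n = ∑ₖ T n k (x)_{k,λ}` at the points `x = Nλ`, where
`(Nλ)_{k,λ} = λ^k N(N-1)⋯(N-k+1)`, determines `T n k` by triangularity, and the binomial
expansion of `e^{ρt} (1 + (e^{λt} - 1))^N` shows that
`T n k = n! [t^n] e^{ρt} ((e^{λt}-1)/λ)^k / k!`.
Write `(e^{λt} - 1)/λ = t W(t)`. The defining identity of the Bernoulli polynomials, rescaled by
`λ`, reads `W^m · ∑ⱼ B^{(m)}_j(r/λ) (λt)^j/j! = e^{rt}`, so
`t^k W^{k+m} · ∑ⱼ B^{(m)}_j(r/λ) (λt)^j/j! = e^{rt} (tW)^k`; comparing coefficients of `t^n`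
gives the identity.
-/

open Finset PowerSeries

lemma ffact_natCast_mul (l : ℝ) (N k : ℕ) :
    ffact l (N * l) k = l ^ k * N.descFactorial k := by
  induction k with
  | zero => simp [ffact]
  | succ k ih =>
    rw [ffact, ih, Nat.descFactorial_succ]
    rcases le_or_gt k N with h | h
    · push_cast [Nat.cast_sub h]; ring
    · simp [Nat.descFactorial_eq_zero_iff_lt.mpr h]

lemma eq_zero_of_sum_mul_descFactorial_eq_zero {R : Type*} [CommRing R] [IsDomain R] [CharZero R]
    {n : ℕ} {c : ℕ → R}
    (h : ∀ N ≤ n, ∑ k ∈ range (n + 1), c k * N.descFactorial k = 0) :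
    ∀ j ≤ n, c j = 0 := by
  intro j
  induction j using Nat.strong_induction_on with
  | _ j ih =>
    intro hj
    have hsum := h j hj
    rw [Finset.sum_eq_single_of_mem j (by simp; omega)] at hsum
    · simpa [Nat.descFactorial_self, Nat.factorial_ne_zero] using hsum
    · intro k hk hkj
      rcases lt_or_gt_of_ne hkj with hlt | hgt
      · rw [ih k hlt (by omega), zero_mul]
      · rw [Nat.descFactorial_eq_zero_iff_lt.mpr hgt, Nat.cast_zero, mul_zero]

lemma eq_of_sum_mul_ffact_natCast_mul_eq {l : ℝ} (hl : l ≠ 0) {n : ℕ} {a b : ℕ → ℝ}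
    (h : ∀ N ≤ n, ∑ k ∈ range (n + 1), a k * ffact l (N * l) k =
      ∑ k ∈ range (n + 1), b k * ffact l (N * l) k) :
    ∀ j ≤ n, a j = b j := by
  have hc := eq_zero_of_sum_mul_descFactorial_eq_zero (c := fun k => (a k - b k) * l ^ k)
    fun N hN => by
      simpa [ffact_natCast_mul, sub_mul, mul_assoc, sub_eq_zero] using h N hN
  intro j hj
  simpa [sub_eq_zero, hl] using hc j hj

/-- `(e^{λt} - 1) / (λt)`. -/
noncomputable def expSubOneDiv (l : ℝ) : PowerSeries ℝ :=
  rescale l (mk fun j => 1 / (j + 1).factorial)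

lemma rescale_exp_eq_one_add (l : ℝ) :
    rescale l (exp ℝ) = 1 + C l * (X * expSubOneDiv l) := by
  ext n
  cases n with
  | zero => simp
  | succ n =>
    simp [expSubOneDiv, coeff_rescale, coeff_succ_X_mul, Nat.factorial_succ]
    ring

/-- `n! [t^n] e^{ρt} ((e^{λt} - 1)/λ)^k / k!`, the generating-function form of the
λ-analogue of the `ρ`-Stirling numbers of the second kind. -/
noncomputable def lstirling (ρ l : ℝ) (n k : ℕ) : ℝ :=
  n.factorial / k.factorial * coeff n (rescale ρ (exp ℝ) * (X * expSubOneDiv l) ^ k)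

lemma mk_pow_div_factorial (x : ℝ) :
    (mk fun j => x ^ j / j.factorial) = rescale x (exp ℝ) := by
  ext j
  simp [coeff_rescale, div_eq_mul_inv]

lemma sum_lstirling_mul_ffact_natCast_mul (ρ l : ℝ) {n N : ℕ} (hN : N ≤ n) :
    ∑ k ∈ range (n + 1), lstirling ρ l n k * ffact l (N * l) k = (N * l + ρ) ^ n := by
  have hgf : rescale (N * l + ρ) (exp ℝ) =
      ∑ k ∈ range (N + 1),
        C (l ^ k * N.choose k) * (rescale ρ (exp ℝ) * (X * expSubOneDiv l) ^ k) := by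
    rw [add_comm, ← exp_mul_exp_eq_exp_add, ← rescale_rescale, ← exp_pow_eq_rescale_exp, map_pow,
      rescale_exp_eq_one_add l, add_comm 1, add_pow, Finset.mul_sum]
    refine Finset.sum_congr rfl fun k _ => ?_
    simp only [one_pow, mul_one, mul_pow, ← map_pow, map_mul, map_natCast]
    ring
  have hcoeff := congrArg (coeff n) hgf
  rw [← mk_pow_div_factorial, coeff_mk, map_sum] at hcoeff
  simp only [coeff_C_mul] at hcoeff
  rw [Finset.sum_subset (range_subset_range.mpr (Nat.add_le_add_right hN 1)) (fun k _ hk => by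
    rw [Nat.choose_eq_zero_of_lt (by simpa using hk)]; simp)] at hcoeff
  rw [div_eq_iff (by positivity)] at hcoeff
  rw [hcoeff, Finset.sum_mul]
  refine Finset.sum_congr rfl fun k _ => ?_
  rw [lstirling, ffact_natCast_mul, Nat.descFactorial_eq_factorial_mul_choose]
  push_cast
  field_simp

lemma eq_lstirling_of_add_pow_eq_sum {ρ l : ℝ} (hl : l ≠ 0) {T : ℕ → ℕ → ℝ}
    (hT : ∀ (n : ℕ) (x : ℝ), (x + ρ) ^ n = ∑ k ∈ range (n + 1), T n k * ffact l x k)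
    {n k : ℕ} (hk : k ≤ n) : T n k = lstirling ρ l n k :=
  eq_of_sum_mul_ffact_natCast_mul_eq hl (fun N hN => by
    rw [← hT, sum_lstirling_mul_ffact_natCast_mul ρ l hN]) k hk

lemma lstirling_zero (l : ℝ) (n k : ℕ) :
    lstirling 0 l n k = n.factorial / k.factorial * coeff n ((X * expSubOneDiv l) ^ k) := by
  simp [lstirling]

lemma expSubOneDiv_pow_mul_rescale {m : ℕ} {b : ℕ → ℝ} {x : ℝ}
    (hb : (mk fun j => (1 : ℝ) / (j + 1).factorial) ^ m * mk (fun j => b j / j.factorial) =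
      mk fun j => x ^ j / j.factorial) (l : ℝ) :
    expSubOneDiv l ^ m * rescale l (mk fun j => b j / j.factorial) = rescale (x * l) (exp ℝ) := by
  rw [expSubOneDiv, ← map_pow, ← map_mul, hb, mk_pow_div_factorial, rescale_rescale]

lemma coeff_mul_eq_sum_Icc {R : Type*} [CommSemiring R] {a : ℕ} {f : R⟦X⟧} (hf : X ^ a ∣ f)
    (g : R⟦X⟧) (n : ℕ) :
    coeff n (f * g) = ∑ p ∈ Icc a n, coeff p f * coeff (n - p) g := by
  rw [coeff_mul, Finset.Nat.sum_antidiagonal_eq_sum_range_succ_mk]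
  symm
  refine Finset.sum_subset (fun p hp => by simp at hp ⊢; omega) fun p hp hp' => ?_
  rw [X_pow_dvd_iff.mp hf p (by simp at hp hp'; omega), zero_mul]

lemma coeff_rescale_exp_mul_pow_eq_sum {m : ℕ} {b : ℕ → ℝ} {x l ρ : ℝ}
    (hb : (mk fun j => (1 : ℝ) / (j + 1).factorial) ^ m * mk (fun j => b j / j.factorial) =
      mk fun j => x ^ j / j.factorial) (hx : x * l = ρ) (n k : ℕ) :
    coeff n (rescale ρ (exp ℝ) * (X * expSubOneDiv l) ^ k) =
      ∑ j ∈ Icc k n, coeff (j + m) ((X * expSubOneDiv l) ^ (k + m)) *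
        (l ^ (n - j) * (b (n - j) / (n - j).factorial)) := by
  have hprod : rescale ρ (exp ℝ) * (X * expSubOneDiv l) ^ k =
      X ^ k * expSubOneDiv l ^ (k + m) * rescale l (mk fun j => b j / j.factorial) := by
    rw [← hx, ← expSubOneDiv_pow_mul_rescale hb]
    ring
  have hshift : (X * expSubOneDiv l) ^ (k + m) = X ^ m * (X ^ k * expSubOneDiv l ^ (k + m)) := by
    ring
  rw [hprod, hshift, coeff_mul_eq_sum_Icc (dvd_mul_right _ _)]
  refine Finset.sum_congr rfl fun j _ => ?_
  rw [coeff_X_pow_mul, coeff_rescale, coeff_mk]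

theorem stmt6_general (l : ℝ) (hl : l ≠ 0) (r : ℕ) (m : ℕ)
    (S Sr : ℕ → ℕ → ℝ) (B : ℕ → ℝ → ℝ)
    (hS : ∀ (n : ℕ) (x : ℝ), x ^ n = ∑ k ∈ range (n + 1), S n k * ffact l x k)
    (hSr : ∀ (n : ℕ) (x : ℝ), (x + r) ^ n = ∑ k ∈ range (n + 1), Sr n k * ffact l x k)
    (hB : ∀ x : ℝ,
      (PowerSeries.mk fun j => (1 : ℝ) / (j + 1).factorial) ^ m *
        PowerSeries.mk (fun j => B j x / j.factorial) =
      PowerSeries.mk fun j => x ^ j / j.factorial)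
    (n k : ℕ) (hkn : k ≤ n) :
    Sr n k / ((k + m).choose k : ℝ) =
      ∑ j ∈ Icc k n, ((n.choose j : ℝ) / ((j + m).choose j : ℝ)) *
        S (j + m) (k + m) * B (n - j) (r / l) * l ^ (n - j) := by
  have hS' : ∀ j ∈ Icc k n, S (j + m) (k + m) = lstirling 0 l (j + m) (k + m) := fun j hj =>
    eq_lstirling_of_add_pow_eq_sum hl (by simpa using hS) (by simp at hj; omega)
  rw [Finset.sum_congr rfl fun j hj => by rw [hS' j hj], eq_lstirling_of_add_pow_eq_sum hl hSr hkn,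
    lstirling, coeff_rescale_exp_mul_pow_eq_sum (hB _) (div_mul_cancel₀ _ hl), Finset.mul_sum,
    Finset.sum_div]
  refine Finset.sum_congr rfl fun j hj => ?_
  have hjn : j ≤ n := (Finset.mem_Icc.mp hj).2
  rw [lstirling_zero, Nat.cast_choose ℝ hjn, Nat.cast_add_choose, Nat.cast_add_choose]
  field_simp

/-- Theorem 7: identity connecting λ-analogues of r-Stirling numbers of the second kind,
λ-analogues of Stirling numbers of the second kind, and values of higher-order Bernoulli
polynomials.  The order-m Bernoulli polynomials `B m j x` are characterized by the formal
power series identity `((e^t - 1)/t)^m · ∑_j B^{(m)}_j(x) t^j/j! = e^{xt}`. -/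
theorem stmt6 (l : ℝ) (hl : l ≠ 0) (r : ℕ) (m : ℕ) (hm : 0 < m)
    (S Sr : ℕ → ℕ → ℝ) (B : ℕ → ℝ → ℝ)
    (hS : ∀ (n : ℕ) (x : ℝ), x ^ n = ∑ k ∈ range (n + 1), S n k * ffact l x k)
    (hSr : ∀ (n : ℕ) (x : ℝ), (x + r) ^ n = ∑ k ∈ range (n + 1), Sr n k * ffact l x k)
    (hB : ∀ x : ℝ,
      (PowerSeries.mk fun j => (1 : ℝ) / (j + 1).factorial) ^ m *
        PowerSeries.mk (fun j => B j x / j.factorial) =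
      PowerSeries.mk fun j => x ^ j / j.factorial)
    (n k : ℕ) (hkn : k ≤ n) :
    Sr n k / ((k + m).choose k : ℝ) =
      ∑ j ∈ Icc k n, ((n.choose j : ℝ) / ((j + m).choose j : ℝ)) *
        S (j + m) (k + m) * B (n - j) (r / l) * l ^ (n - j) :=
  stmt6_general l hl r m S Sr B hS hSr hB n k hkn
end

section
/- For nonnegative integers k and positive integer m, as formal power series in t, (1/k!)(1/λ^k)((e^{λmt}−1)/m)^k e^t = Σ_{n≥k} W_{m,λ}(n,k) t^n/n!, where W_{m,λ}(n,k) are the λ-analogues of the Whitney-type Stirling numbers of the second kind. -/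
open Finset PowerSeries

/-!
Expanding binomially, `(e^{λmt} - 1)^k e^t = ∑ⱼ (-1)^{k-j} C(k,j) e^{(jλm+1)t}`, so the `n`-th
coefficient is an alternating sum of `(jλm + 1)^n`, i.e. a `k`-th forward difference in `j`.
Evaluating the defining identity of `W_{m,λ}` at `x = jλ` gives `(jλ)_{i,λ} = λ^i j(j-1)⋯(j-i+1)`,
so `(jλm + 1)^n` is a polynomial in `j` written in the falling factorial basis, and the `k`-th
forward difference at `0` picks out `k!` times its `k`-th coefficient `W_{m,λ}(n,k) m^k λ^k`.
-/

theorem Int.alternating_sum_range_choose_mul_choose (k i : ℕ) :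
    ∑ j ∈ Finset.range (k + 1), (-1 : ℤ) ^ (k - j) * k.choose j * j.choose i =
      if k = i then 1 else 0 := by
  rw [← fwdDiff_iter_choose_zero i k, fwdDiff_iter_eq_sum_shift]
  simp [mul_assoc]

theorem alternating_sum_range_choose_mul_descFactorial {R : Type*} [CommRing R] (k i : ℕ) :
    ∑ j ∈ range (k + 1), (-1 : R) ^ (k - j) * k.choose j * j.descFactorial i =
      if k = i then (k.factorial : R) else 0 := by
  have h := congrArg (Int.cast : ℤ → R) (Int.alternating_sum_range_choose_mul_choose k i)
  push_cast at h
  simp_rw [Nat.descFactorial_eq_factorial_mul_choose, Nat.cast_mul,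
    mul_left_comm _ (i.factorial : R), ← mul_sum, h]
  split_ifs with hki <;> simp [hki]

theorem alternating_sum_range_choose_mul_sum_descFactorial {R : Type*} [CommRing R]
    (c : ℕ → R) (k N : ℕ) :
    ∑ j ∈ range (k + 1), (-1 : R) ^ (k - j) * k.choose j * ∑ i ∈ range N, c i * j.descFactorial i =
      if k < N then k.factorial * c k else 0 := by
  simp_rw [mul_sum, sum_comm (s := range (k + 1)), mul_left_comm _ (c _), ← mul_sum,
    alternating_sum_range_choose_mul_descFactorial, mul_ite, mul_zero, sum_ite_eq, mem_range,
    mul_comm]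

theorem ffact_natCast_mul_self (l : ℝ) (j i : ℕ) :
    ffact l (j * l) i = l ^ i * j.descFactorial i := by
  induction i with
  | zero => simp [ffact]
  | succ i ih =>
    rw [ffact, ih, Nat.descFactorial_succ]
    rcases le_or_gt i j with h | h
    · push_cast [Nat.cast_sub h]
      ring
    · simp [Nat.descFactorial_eq_zero_iff_lt.2 h]

theorem coeff_rescale_exp_sub_one_pow_mul_exp {A : Type*} [CommRing A] [Algebra ℚ A]
    (a : A) (k n : ℕ) :
    coeff n ((rescale a (exp A) - 1) ^ k * exp A) =
      (∑ j ∈ range (k + 1), (-1) ^ (k - j) * k.choose j * (j * a + 1) ^ n) *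
        algebraMap ℚ A (1 / n.factorial) := by
  have hterm (j : ℕ) : rescale a (exp A) ^ j * exp A = rescale (j * a + 1) (exp A) := by
    rw [← map_pow, exp_pow_eq_rescale_exp, rescale_rescale, ← exp_mul_exp_eq_exp_add, rescale_one,
      RingHom.id_apply]
  rw [sub_eq_add_neg, add_pow, sum_mul, map_sum, sum_mul]
  refine sum_congr rfl fun j _ => ?_
  rw [show rescale a (exp A) ^ j * (-1) ^ (k - j) * (k.choose j : A⟦X⟧) * exp A =
      C ((-1 : A) ^ (k - j) * k.choose j) * (rescale a (exp A) ^ j * exp A) by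
        simp only [map_mul, map_pow, map_neg, map_one, map_natCast]; ring,
    hterm, coeff_C_mul, coeff_rescale, coeff_exp]
  ring

theorem alternating_sum_range_choose_mul_pow_eq {l m : ℝ} {n : ℕ} (W : ℕ → ℝ)
    (hW : ∀ x : ℝ, (m * x + 1) ^ n = ∑ i ∈ range (n + 1), W i * m ^ i * ffact l x i) (k : ℕ) :
    ∑ j ∈ range (k + 1), (-1 : ℝ) ^ (k - j) * k.choose j * (j * (l * m) + 1) ^ n =
      if k ≤ n then k.factorial * (W k * m ^ k * l ^ k) else 0 := by
  have hexpand (j : ℕ) : ((j : ℝ) * (l * m) + 1) ^ n =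
      ∑ i ∈ range (n + 1), W i * m ^ i * l ^ i * j.descFactorial i := by
    rw [show (j : ℝ) * (l * m) + 1 = m * (j * l) + 1 by ring, hW]
    simp_rw [ffact_natCast_mul_self, mul_assoc]
  simp_rw [hexpand, alternating_sum_range_choose_mul_sum_descFactorial, Nat.lt_succ_iff]

/-- Theorem 8: generating function of the λ-analogues of the Whitney-type Stirling numbers
of the second kind: `(1/k!)(1/λᵏ)((e^{λmt}-1)/m)ᵏ e^t = ∑_{n ≥ k} W_{m,λ}(n,k) tⁿ/n!`. -/
theorem stmt7 (l : ℝ) (hl : l ≠ 0) (m : ℕ) (hm : 0 < m) (W : ℕ → ℕ → ℝ)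
    (hW : ∀ (n : ℕ) (x : ℝ),
      ((m : ℝ) * x + 1) ^ n = ∑ k ∈ range (n + 1), W n k * (m : ℝ) ^ k * ffact l x k)
    (k : ℕ) :
    PowerSeries.C (R := ℝ) ((1 / k.factorial) * (1 / l ^ k)) *
        (PowerSeries.C (R := ℝ) (1 / (m : ℝ)) * (rescale (l * m) (PowerSeries.exp ℝ) - 1)) ^ k *
        PowerSeries.exp ℝ =
      PowerSeries.mk (fun n => if k ≤ n then W n k / n.factorial else 0) := by
  ext n
  rw [coeff_mk, mul_pow, ← map_pow, mul_assoc, mul_assoc, coeff_C_mul, coeff_C_mul,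
    coeff_rescale_exp_sub_one_pow_mul_exp, alternating_sum_range_choose_mul_pow_eq (W n) (hW n)]
  have hm' : (m : ℝ) ≠ 0 := Nat.cast_ne_zero.2 hm.ne'
  split_ifs
  · rw [map_div₀, map_one, map_natCast, one_div_pow]
    field_simp
  · simp
end

section
/- For nonnegative integers n, k with n ≥ k, Σ_{l=k}^{n} C(n,l) W_{1,λ}(l,k) (λ−1)^{n-l} = S₂_λ(n+1, k+1). -/
open Finset PowerSeries

/-!
Write `x ^ (n + 1) = x · ((x - λ + 1) + (λ - 1)) ^ n` and expand binomially. Each power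
`(x - λ + 1) ^ j` is expanded by `W` at the point `x - λ`, and `x · (x - λ)_{k,λ} = (x)_{k+1,λ}`,
so `x ^ (n + 1) = ∑ₖ (∑ⱼ C(n,j) W(j,k) (λ-1)^(n-j)) (x)_{k+1,λ}`. Comparing with the expansion by
`S` gives the identity, because coefficients in the basis `(x)_{k,λ}` are unique: evaluating at
`x = iλ` kills every `(x)_{j,λ}` with `j > i` but not `(x)_{i,λ}`.
-/

theorem ffact_succ_eq_mul_ffact_sub (l x : ℝ) (k : ℕ) :
    ffact l x (k + 1) = x * ffact l (x - l) k := by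
  induction k with
  | zero => simp [ffact]
  | succ k ih =>
    rw [ffact, ih, ffact]
    push_cast
    ring

theorem ffact_natCast_mul_eq_zero_s8 {l : ℝ} {i j : ℕ} (hij : i < j) : ffact l (i * l) j = 0 := by
  induction j with
  | zero => omega
  | succ j ih =>
    rcases (Nat.lt_succ_iff.mp hij).lt_or_eq with h | rfl
    · rw [ffact, ih h, zero_mul]
    · rw [ffact, sub_self, mul_zero]

theorem ffact_natCast_mul_ne_zero {l : ℝ} (hl : l ≠ 0) {i j : ℕ} (hji : j ≤ i) :
    ffact l (i * l) j ≠ 0 := by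
  induction j with
  | zero => simp [ffact]
  | succ j ih =>
    rw [ffact, ← sub_mul]
    have hij : (j : ℝ) < i := by exact_mod_cast hji
    exact mul_ne_zero (ih (by omega)) (mul_ne_zero (sub_ne_zero.mpr hij.ne') hl)

theorem eq_zero_of_sum_mul_ffact_eq_zero_s8 {l : ℝ} (hl : l ≠ 0) {m : ℕ} {a : ℕ → ℝ}
    (h : ∀ x, ∑ j ∈ range m, a j * ffact l x j = 0) : ∀ i < m, a i = 0 := by
  intro i
  induction i using Nat.strong_induction_on with
  | _ i ih =>
    intro hi
    have hx := h (i * l)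
    rw [sum_eq_single_of_mem i (mem_range.mpr hi)] at hx
    · exact (mul_eq_zero.mp hx).resolve_right (ffact_natCast_mul_ne_zero hl le_rfl)
    · intro t _ hti
      rcases hti.lt_or_gt with hlt | hgt
      · rw [ih t hlt (hlt.trans hi), zero_mul]
      · rw [ffact_natCast_mul_eq_zero_s8 hgt, mul_zero]

theorem eq_of_sum_mul_ffact_eq_s8 {l : ℝ} (hl : l ≠ 0) {m : ℕ} {a b : ℕ → ℝ}
    (h : ∀ x, ∑ j ∈ range m, a j * ffact l x j = ∑ j ∈ range m, b j * ffact l x j) :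
    ∀ i < m, a i = b i := by
  have hsub : ∀ x, ∑ j ∈ range m, (a - b) j * ffact l x j = 0 := fun x => by
    simp only [Pi.sub_apply, sub_mul, sum_sub_distrib, h, sub_self]
  exact fun i hi => sub_eq_zero.mp (eq_zero_of_sum_mul_ffact_eq_zero_s8 hl hsub i hi)

theorem pow_succ_eq_sum_mul_ffact_succ {l : ℝ} {W : ℕ → ℕ → ℝ}
    (hW : ∀ (n : ℕ) (x : ℝ), (x + 1) ^ n = ∑ k ∈ range (n + 1), W n k * ffact l x k)
    (n : ℕ) (x : ℝ) :
    x ^ (n + 1) = ∑ k ∈ range (n + 1),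
      (∑ j ∈ Icc k n, (n.choose j : ℝ) * W j k * (l - 1) ^ (n - j)) * ffact l x (k + 1) := by
  calc x ^ (n + 1) = x * ((x - l + 1) + (l - 1)) ^ n := by ring
    _ = ∑ j ∈ range (n + 1), ∑ k ∈ range (j + 1),
          (n.choose j : ℝ) * W j k * (l - 1) ^ (n - j) * ffact l x (k + 1) := by
      rw [add_pow, mul_sum]
      refine sum_congr rfl fun j _ => ?_
      rw [hW j (x - l), sum_mul, sum_mul, mul_sum]
      refine sum_congr rfl fun k _ => ?_
      rw [ffact_succ_eq_mul_ffact_sub]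
      ring
    _ = _ := by
      rw [sum_comm' (t' := range (n + 1)) (s' := fun k => Icc k n)]
      · simp only [sum_mul]
      · intro j k
        simp only [mem_range, mem_Icc]
        omega

/-- Theorem 9: `∑_{l=k}^n C(n,l) W_{1,λ}(l,k) (λ-1)^{n-l} = S₂_λ(n+1,k+1)`. -/
theorem stmt8 (l : ℝ) (hl : l ≠ 0) (S W : ℕ → ℕ → ℝ)
    (hS : ∀ (n : ℕ) (x : ℝ), x ^ n = ∑ k ∈ range (n + 1), S n k * ffact l x k)
    (hW : ∀ (n : ℕ) (x : ℝ), (x + 1) ^ n = ∑ k ∈ range (n + 1), W n k * ffact l x k)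
    (n k : ℕ) (hkn : k ≤ n) :
    ∑ j ∈ Icc k n, (n.choose j : ℝ) * W j k * (l - 1) ^ (n - j) = S (n + 1) (k + 1) := by
  set c : ℕ → ℝ := fun k => ∑ j ∈ Icc k n, (n.choose j : ℝ) * W j k * (l - 1) ^ (n - j)
  let b : ℕ → ℝ := fun i => Nat.casesOn i 0 c
  have hexpand (x : ℝ) :
      ∑ i ∈ range (n + 2), b i * ffact l x i = ∑ i ∈ range (n + 2), S (n + 1) i * ffact l x i := by
    have hb0 : b 0 = 0 := rfl
    rw [← hS, pow_succ_eq_sum_mul_ffact_succ hW, sum_range_succ', hb0, zero_mul, add_zero]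
  exact eq_of_sum_mul_ffact_eq_s8 hl hexpand (k + 1) (by omega)
end

section
/- For a positive integer m and nonzero real λ, as formal power series in t, e^t · exp(x(e^{λmt}−1)/(λm)) = Σ_{n≥0} d_{m,λ}(n,x) t^n/n!, where d_{m,λ}(n,x) = Σ_{k=0}^n W_{m,λ}(n,k) x^k is the λ-analogue of the Dowling polynomial. -/
/-!
Evaluating the defining identity of `W` at `x = λ j` turns `(λ j)_{k,λ}` into
`λ^k j (j-1) ⋯ (j-k+1)`, so averaging over the Poisson weights `y^j/j!` gives Dobinski's formula
`e^y d_{m,λ}(n, λ m y) = ∑_j y^j/j! (λ m j + 1)^n`. The double series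
`∑_{j,n} y^j/j! ((λ m j + 1) t)^n/n!` converges absolutely; summed over `n` first it is
`∑_j y^j/j! e^{(λ m j + 1) t} = e^t exp(y e^{λ m t})`, summed over `j` first it is
`e^y ∑_n d_{m,λ}(n, x) t^n/n!` for `y = x/(λ m)`.
-/

open Finset PowerSeries

open Real
open scoped Nat

theorem hasSum_pow_div_factorial_exp (x : ℝ) : HasSum (fun n => x ^ n / n !) (exp x) :=
  Real.exp_eq_exp_ℝ ▸ NormedSpace.expSeries_div_hasSum_exp x

theorem ffact_mul_natCast (l : ℝ) (j : ℕ) :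
    ∀ k : ℕ, ffact l (l * j) k = l ^ k * (j.descFactorial k : ℝ)
  | 0 => by simp [ffact]
  | k + 1 => by
    rw [ffact, ffact_mul_natCast l j k, Nat.descFactorial_succ]
    rcases le_or_gt k j with hkj | hjk
    · push_cast [hkj]
      ring
    · simp [Nat.descFactorial_eq_zero_iff_lt.mpr hjk]

theorem hasSum_descFactorial_mul_pow_div_factorial (y : ℝ) (k : ℕ) :
    HasSum (fun j : ℕ => (j.descFactorial k : ℝ) * y ^ j / j !) (y ^ k * exp y) := by
  have hlow : ∑ j ∈ range k, (j.descFactorial k : ℝ) * y ^ j / j ! = 0 :=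
    sum_eq_zero fun j hj => by
      simp [Nat.descFactorial_eq_zero_iff_lt.mpr (mem_range.mp hj)]
  rw [← hasSum_nat_add_iff' k, hlow, sub_zero]
  refine ((hasSum_pow_div_factorial_exp y).mul_left (y ^ k)).congr_fun fun j => ?_
  have hfact : ((j + k) ! : ℝ) = j ! * (j + k).descFactorial k := by
    exact_mod_cast (Nat.add_sub_cancel j k ▸ Nat.factorial_mul_descFactorial
      (Nat.le_add_left k j)).symm
  have hdesc : ((j + k).descFactorial k : ℝ) ≠ 0 := by
    exact_mod_cast (Nat.descFactorial_pos.mpr (Nat.le_add_left k j)).ne'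
  rw [hfact, pow_add]
  field_simp

theorem hasSum_dobinski (l : ℝ) (m : ℕ) (W : ℕ → ℕ → ℝ)
    (hW : ∀ (n : ℕ) (x : ℝ),
      ((m : ℝ) * x + 1) ^ n = ∑ k ∈ range (n + 1), W n k * (m : ℝ) ^ k * ffact l x k)
    (n : ℕ) (y : ℝ) :
    HasSum (fun j : ℕ => y ^ j / j ! * (l * m * j + 1) ^ n)
      (exp y * ∑ k ∈ range (n + 1), W n k * (l * m * y) ^ k) := by
  have hterm : ∀ j : ℕ, y ^ j / j ! * (l * m * j + 1) ^ n =
      ∑ k ∈ range (n + 1), W n k * (l * m) ^ k * ((j.descFactorial k : ℝ) * y ^ j / j !) := by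
    intro j
    rw [show l * m * j + 1 = m * (l * j) + 1 by ring, hW, mul_sum]
    refine sum_congr rfl fun k _ => ?_
    rw [ffact_mul_natCast]
    ring
  have hvalue : exp y * ∑ k ∈ range (n + 1), W n k * (l * m * y) ^ k =
      ∑ k ∈ range (n + 1), W n k * (l * m) ^ k * (y ^ k * exp y) := by
    rw [mul_sum]
    exact sum_congr rfl fun k _ => by ring
  rw [hvalue]
  exact (hasSum_sum fun k _ => (hasSum_descFactorial_mul_pow_div_factorial y k).mul_left
    (W n k * (l * m) ^ k)).congr_fun hterm

theorem summable_prod_mul_pow_div_factorial {c s : ℕ → ℝ}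
    (h : Summable fun j => |c j| * exp |s j|) :
    Summable fun p : ℕ × ℕ => c p.1 * (s p.1 ^ p.2 / p.2 !) := by
  refine Summable.of_norm ?_
  rw [summable_prod_of_nonneg fun _ => norm_nonneg _]
  have hfiber : ∀ j, HasSum (fun n => ‖c j * (s j ^ n / n !)‖) (|c j| * exp |s j|) :=
    fun j => by
      simpa [abs_mul, abs_div, abs_pow] using (hasSum_pow_div_factorial_exp |s j|).mul_left |c j|
  exact ⟨fun j => (hfiber j).summable, by simpa only [fun j => (hfiber j).tsum_eq] using h⟩

theorem hasSum_pow_div_factorial_mul_exp (y a b t : ℝ) :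
    HasSum (fun j : ℕ => y ^ j / j ! * exp ((a * j + b) * t))
      (exp (b * t) * exp (y * exp (a * t))) := by
  refine ((hasSum_pow_div_factorial_exp (y * exp (a * t))).mul_left (exp (b * t))).congr_fun
    fun j => ?_
  rw [show (a * j + b) * t = j * (a * t) + b * t by ring, exp_add, exp_nat_mul]
  ring

theorem hasSum_prod_pow_div_factorial_mul_affine_pow (y a b t : ℝ) :
    HasSum (fun p : ℕ × ℕ => y ^ p.1 / p.1 ! * (((a * p.1 + b) * t) ^ p.2 / p.2 !))
      (exp (b * t) * exp (y * exp (a * t))) := by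
  have hbound : ∀ j : ℕ, |y ^ j / j !| * exp |(a * j + b) * t| ≤
      |y| ^ j / j ! * exp ((|a| * j + |b|) * |t|) := fun j => by
    rw [abs_div, abs_pow, Nat.abs_cast]
    gcongr
    calc |(a * j + b) * t| ≤ (|a * j| + |b|) * |t| := by
          rw [abs_mul]; gcongr; exact abs_add_le _ _
      _ = (|a| * j + |b|) * |t| := by rw [abs_mul, Nat.abs_cast]
  have hsummable := summable_prod_mul_pow_div_factorial <|
    (hasSum_pow_div_factorial_mul_exp |y| |a| |b| |t|).summable.of_nonneg_of_le
      (fun _ => by positivity) hbound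
  have hfiberwise := hsummable.hasSum.prod_fiberwise fun j =>
    (hasSum_pow_div_factorial_exp ((a * j + b) * t)).mul_left (y ^ j / j !)
  rw [← hfiberwise.unique (hasSum_pow_div_factorial_mul_exp y a b t)]
  exact hsummable.hasSum

/-- Theorem 10: generating function of the λ-analogues of Dowling polynomials:
`e^t · e^{x(e^{λmt}-1)/(λm)} = ∑_{n ≥ 0} d_{m,λ}(n,x) tⁿ/n!`, where
`d_{m,λ}(n,x) = ∑_{k=0}^n W_{m,λ}(n,k) xᵏ`. -/
theorem stmt9 (l : ℝ) (hl : l ≠ 0) (m : ℕ) (hm : 0 < m) (W : ℕ → ℕ → ℝ)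
    (hW : ∀ (n : ℕ) (x : ℝ),
      ((m : ℝ) * x + 1) ^ n = ∑ k ∈ range (n + 1), W n k * (m : ℝ) ^ k * ffact l x k)
    (d : ℕ → ℝ → ℝ)
    (hd : ∀ (n : ℕ) (x : ℝ), d n x = ∑ k ∈ range (n + 1), W n k * x ^ k)
    (x t : ℝ) :
    HasSum (fun n : ℕ => d n x * t ^ n / n.factorial)
      (Real.exp t * Real.exp (x * (Real.exp (l * m * t) - 1) / (l * m))) := by
  have hlm : (l * m : ℝ) ≠ 0 := mul_ne_zero hl (Nat.cast_ne_zero.mpr hm.ne')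
  set y := x / (l * m)
  have hfiber : ∀ n : ℕ, HasSum (fun j => y ^ j / j ! * (((l * m * j + 1) * t) ^ n / n !))
      (exp y * (d n x * t ^ n / n !)) := fun n => by
    have hdob := (hasSum_dobinski l m W hW n y).mul_right (t ^ n / n !)
    rw [show l * m * y = x from mul_div_cancel₀ x hlm, ← hd, mul_assoc, ← mul_div_assoc]
      at hdob
    exact hdob.congr_fun fun j => by rw [mul_pow]; ring
  have hswap := (Equiv.prodComm ℕ ℕ).hasSum_iff.mpr
    (hasSum_prod_pow_div_factorial_mul_affine_pow y (l * m) 1 t)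
  have htotal := (hswap.prod_fiberwise hfiber).div_const (exp y)
  rw [one_mul, mul_div_assoc, ← exp_sub,
    show y * exp (l * m * t) - y = x * (exp (l * m * t) - 1) / (l * m) by ring] at htotal
  exact htotal.congr_fun fun n => by field_simp
end

section
/- For nonnegative integer k, positive integers m, r, as formal power series in t, (1/k!)(1/λ^k)((e^{λmt}−1)/m)^k e^{rt} = Σ_{n≥k} W^{(r)}_{m,λ}(n,k) t^n/n!, where W^{(r)}_{m,λ}(n,k) are the λ-analogues of the Whitney-type r-Stirling numbers of the second kind. -/
/-!
Expanding the binomial, `((e^{λmt} - 1)/m)^k e^{rt} = m^{-k} ∑_j (-1)^{k-j} C(k,j) e^{(jλm + r)t}`,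
so the `n`-th coefficient is `m^{-k}/n!` times the `k`-th forward difference with step `λ`, at `0`,
of `x ↦ (mx + r)^n`. By the defining expansion of `W` this difference is
`∑_i W(n,i) m^i Δ_λ^k (x)_{i,λ} |_{x=0}`, and `Δ_λ^k (x)_{i,λ} |_{x=0} = λ^k k! δ_{ik}` because
`(jλ)_{i,λ} = λ^i i! C(j,i)` and the `k`-th difference of `j ↦ C(j,i)` at `0` is `δ_{ik}`.
-/

open Finset PowerSeries

lemma sum_range_alternating_choose_mul_choose (k i : ℕ) :
    ∑ j ∈ range (k + 1), (-1 : ℤ) ^ (k - j) * k.choose j * j.choose i =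
      if k = i then 1 else 0 := by
  simpa [fwdDiff_iter_eq_sum_shift] using fwdDiff_iter_choose_zero i k

namespace PowerSeries

variable {K : Type*} [Field K] [CharZero K]

lemma coeff_rescale_exp (c : K) (n : ℕ) : coeff n (rescale c (exp K)) = c ^ n / n.factorial := by
  simp [coeff_rescale, coeff_exp, div_eq_mul_inv, mul_comm]

lemma rescale_exp_sub_one_pow_mul_rescale_exp (a b : K) (k : ℕ) :
    (rescale a (exp K) - 1) ^ k * rescale b (exp K) =
      ∑ j ∈ range (k + 1), C ((-1 : K) ^ (k - j) * k.choose j) * rescale (j * a + b) (exp K) := by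
  rw [sub_eq_add_neg, add_pow, sum_mul]
  refine sum_congr rfl fun j _ => ?_
  rw [← map_pow, exp_pow_eq_rescale_exp, rescale_rescale, ← exp_mul_exp_eq_exp_add,
    ← map_natCast C]
  simp only [map_mul, map_pow, map_neg, map_one]
  ring

lemma coeff_rescale_exp_sub_one_pow_mul_rescale_exp (a b : K) (k n : ℕ) :
    coeff n ((rescale a (exp K) - 1) ^ k * rescale b (exp K)) =
      (∑ j ∈ range (k + 1), (-1) ^ (k - j) * k.choose j * (j * a + b) ^ n) / n.factorial := by
  simp only [rescale_exp_sub_one_pow_mul_rescale_exp, map_sum, coeff_C_mul, coeff_rescale_exp,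
    sum_div, mul_div_assoc]

end PowerSeries

lemma ffact_natCast_mul_s11 (l : ℝ) (j : ℕ) :
    ∀ i : ℕ, ffact l (j * l) i = l ^ i * j.descFactorial i
  | 0 => by simp [ffact]
  | i + 1 => by
    rw [ffact, ffact_natCast_mul_s11 l j i, Nat.descFactorial_succ]
    rcases le_or_gt i j with h | h
    · push_cast [Nat.cast_sub h]
      ring
    · rw [Nat.descFactorial_eq_zero_iff_lt.2 h]
      push_cast
      ring

lemma sum_range_alternating_choose_mul_ffact (l : ℝ) (k i : ℕ) :
    ∑ j ∈ range (k + 1), (-1 : ℝ) ^ (k - j) * k.choose j * ffact l (j * l) i =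
      if k = i then l ^ k * k.factorial else 0 := by
  have h := congrArg (Int.cast : ℤ → ℝ) (sum_range_alternating_choose_mul_choose k i)
  push_cast [apply_ite (Int.cast : ℤ → ℝ)] at h
  simp_rw [ffact_natCast_mul_s11, Nat.descFactorial_eq_factorial_mul_choose]
  calc _ = l ^ i * i.factorial *
        ∑ j ∈ range (k + 1), (-1 : ℝ) ^ (k - j) * k.choose j * j.choose i := by
        rw [mul_sum]
        push_cast
        exact sum_congr rfl fun _ _ => by ring
    _ = _ := by rw [h]; split_ifs with hki <;> simp [hki]

lemma sum_range_alternating_choose_mul_of_eq_sum_ffact {l : ℝ} {f : ℝ → ℝ} {c : ℕ → ℝ} {N : ℕ}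
    (hf : ∀ x, f x = ∑ i ∈ range (N + 1), c i * ffact l x i) (k : ℕ) :
    ∑ j ∈ range (k + 1), (-1 : ℝ) ^ (k - j) * k.choose j * f (j * l) =
      if k ≤ N then c k * l ^ k * k.factorial else 0 := by
  calc _ = ∑ i ∈ range (N + 1),
        c i * ∑ j ∈ range (k + 1), (-1 : ℝ) ^ (k - j) * k.choose j * ffact l (j * l) i := by
        simp_rw [hf, mul_sum]
        rw [sum_comm]
        exact sum_congr rfl fun _ _ => sum_congr rfl fun _ _ => by ring
    _ = _ := by
        simp_rw [sum_range_alternating_choose_mul_ffact, mul_ite, mul_zero, sum_ite_eq,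
          mem_range, Nat.lt_succ_iff, mul_assoc]

theorem stmt11_general (l : ℝ) (hl : l ≠ 0) (m r : ℕ) (hm : 0 < m)
    (W : ℕ → ℕ → ℝ)
    (hW : ∀ (n : ℕ) (x : ℝ),
      ((m : ℝ) * x + r) ^ n = ∑ k ∈ range (n + 1), W n k * (m : ℝ) ^ k * ffact l x k)
    (k : ℕ) :
    PowerSeries.C (R := ℝ) ((1 / k.factorial) * (1 / l ^ k)) *
        (PowerSeries.C (R := ℝ) (1 / (m : ℝ)) * (rescale (l * m) (PowerSeries.exp ℝ) - 1)) ^ k *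
        rescale (r : ℝ) (PowerSeries.exp ℝ) =
      PowerSeries.mk (fun n => if k ≤ n then W n k / n.factorial else 0) := by
  have hm0 : (m : ℝ) ≠ 0 := by positivity
  ext n
  have hdiff := sum_range_alternating_choose_mul_of_eq_sum_ffact (hW n) k
  have hrate : ∀ j : ℕ, (j : ℝ) * (l * m) + r = m * (j * l) + r := fun j => by ring
  rw [mul_pow, ← map_pow, mul_assoc, mul_assoc, coeff_C_mul, coeff_C_mul,
    coeff_rescale_exp_sub_one_pow_mul_rescale_exp, coeff_mk]
  simp_rw [hrate, hdiff, one_div_pow]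
  split_ifs
  · field_simp
  · simp

/-- Theorem 12: generating function of the λ-analogues of the Whitney-type r-Stirling
numbers of the second kind:
`(1/k!)(1/λᵏ)((e^{λmt}-1)/m)ᵏ e^{rt} = ∑_{n ≥ k} W^{(r)}_{m,λ}(n,k) tⁿ/n!`. -/
theorem stmt11 (l : ℝ) (hl : l ≠ 0) (m r : ℕ) (hm : 0 < m) (hr : 0 < r)
    (W : ℕ → ℕ → ℝ)
    (hW : ∀ (n : ℕ) (x : ℝ),
      ((m : ℝ) * x + r) ^ n = ∑ k ∈ range (n + 1), W n k * (m : ℝ) ^ k * ffact l x k)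
    (k : ℕ) :
    PowerSeries.C (R := ℝ) ((1 / k.factorial) * (1 / l ^ k)) *
        (PowerSeries.C (R := ℝ) (1 / (m : ℝ)) * (rescale (l * m) (PowerSeries.exp ℝ) - 1)) ^ k *
        rescale (r : ℝ) (PowerSeries.exp ℝ) =
      PowerSeries.mk (fun n => if k ≤ n then W n k / n.factorial else 0) :=
  stmt11_general l hl m r hm W hW k
end
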